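/- Let G = (V, E) be a finite directed graph with vertex set V = {1,…,n} and edge set E ⊆ V × V, let y ∈ ℝⁿ and let λ_F ≥ 0, λ_L ≥ 0, λ_NI ≥ 0. Let β* = β̂(y, λ_F, 0, λ_NI) be the unique minimizer of the fused nearly-isotonic objective (λ_L = 0). Then the vector obtained by applying the soft-thresholding operator S_{λ_L} to β* componentwise, i.e. the vector with i-th component S_{λ_L}(β*_i), is the unique minimizer β̂(y, λ_F, λ_L, λ_NI) of the fused lasso nearly-isotonic objective. -/
import Mathlib


open Finset

/-- The fused lasso nearly-isotonic objective over a finite directed graph with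
vertex set `Fin n` and edge set `E ⊆ Fin n × Fin n`. -/
noncomputable def graphFlniObj {n : ℕ} (E : Finset (Fin n × Fin n)) (y : Fin n → ℝ)
    (lF lL lNI : ℝ) (β : Fin n → ℝ) : ℝ :=
  (1 / 2) * ∑ i, (y i - β i) ^ 2 + lF * ∑ e ∈ E, |β e.1 - β e.2|
    + lL * ∑ i, |β i| + lNI * ∑ e ∈ E, max (β e.1 - β e.2) 0

/-- The soft-thresholding operator at level `λ`:
`S_λ(x) = x − λ` if `x ≥ λ`, `0` if `|x| ≤ λ`, and `x + λ` if `x ≤ −λ`. -/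
noncomputable def softThresh (l x : ℝ) : ℝ :=
  if l ≤ x then x - l else if x ≤ -l then x + l else 0

section helpers
variable {lL : ℝ}

lemma st_mono (hL : 0 ≤ lL) : Monotone (softThresh lL) := by
  intro x y hxy
  unfold softThresh
  split_ifs <;> linarith

lemma st_res_mono (hL : 0 ≤ lL) : Monotone (fun x => x - softThresh lL x) := by
  intro x y hxy
  unfold softThresh
  simp only
  split_ifs <;> linarith

lemma st_res_abs_le (hL : 0 ≤ lL) (x : ℝ) : |x - softThresh lL x| ≤ lL := by
  rw [abs_le]; unfold softThresh; split_ifs <;> constructor <;> linarith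

lemma st_res_mul (hL : 0 ≤ lL) (x : ℝ) :
    (x - softThresh lL x) * softThresh lL x = lL * |softThresh lL x| := by
  unfold softThresh
  split_ifs with h1 h2
  · rw [abs_of_nonneg (by linarith)]; ring
  · rw [abs_of_nonpos (by linarith)]; ring
  · simp

lemma st_key (hL : 0 ≤ lL) (x z : ℝ) :
    (x - softThresh lL x) * (z - softThresh lL x) ≤ lL * |z| - lL * |softThresh lL x| := by
  have h1 := st_res_mul hL x
  have h2 := st_res_abs_le hL x
  have h3 : (x - softThresh lL x) * z ≤ lL * |z| := by
    calc (x - softThresh lL x) * z ≤ |(x - softThresh lL x) * z| := le_abs_self _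
    _ = |x - softThresh lL x| * |z| := abs_mul _ _
    _ ≤ lL * |z| := mul_le_mul_of_nonneg_right h2 (abs_nonneg z)
  nlinarith [h1, h3]

end helpers

section phi
variable {lF lNI : ℝ}

lemma phi_lip (hF : 0 ≤ lF) (hNI : 0 ≤ lNI) (u δ : ℝ) :
    lF * |u + δ| + lNI * max (u + δ) 0 ≤
      lF * |u| + lNI * max u 0 + ((lF + lNI) * max δ 0 + lF * max (-δ) 0) := by
  have h1 : |u + δ| ≤ |u| + |δ| := abs_add_le u δ
  have h2 : max δ 0 + max (-δ) 0 = |δ| := by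
    rcases le_total δ 0 with h | h
    · rw [max_eq_right h, abs_of_nonpos h, max_eq_left (by linarith)]; ring
    · rw [max_eq_left h, abs_of_nonneg h, max_eq_right (by linarith)]; ring
  have h3 : max (u + δ) 0 ≤ max u 0 + max δ 0 := by
    apply max_le
    · exact add_le_add (le_max_left _ _) (le_max_left _ _)
    · have := le_max_right u 0; have := le_max_right δ 0; linarith
  nlinarith [mul_le_mul_of_nonneg_left h1 hF, mul_le_mul_of_nonneg_left h3 hNI]

lemma phi_lower (hF : 0 ≤ lF) (hNI : 0 ≤ lNI) (v δ : ℝ)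
    (hc1 : 0 < v → 0 ≤ δ) (hc2 : v < 0 → δ ≤ 0) :
    lF * |v| + lNI * max v 0 + ((lF + lNI) * max δ 0 + lF * max (-δ) 0) ≤
      lF * |v + δ| + lNI * max (v + δ) 0 := by
  rcases lt_trichotomy v 0 with hv | hv | hv
  · have hδ := hc2 hv
    rw [abs_of_neg hv, abs_of_nonpos (by linarith : v + δ ≤ 0), max_eq_right hδ,
      max_eq_right hv.le, max_eq_right (by linarith : v + δ ≤ 0),
      max_eq_left (by linarith : (0:ℝ) ≤ -δ)]
    linarith
  · subst hv
    have h2 : max δ 0 + max (-δ) 0 = |δ| := by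
      rcases le_total δ 0 with h | h
      · rw [max_eq_right h, abs_of_nonpos h, max_eq_left (by linarith)]; ring
      · rw [max_eq_left h, abs_of_nonneg h, max_eq_right (by linarith)]; ring
    simp only [abs_zero, max_self, zero_add]
    nlinarith [h2]
  · have hδ := hc1 hv
    rw [abs_of_pos hv, abs_of_pos (by linarith), max_eq_left hδ,
      max_eq_left hv.le, max_eq_left (by linarith : (0:ℝ) ≤ v + δ),
      max_eq_right (by linarith : -δ ≤ 0)]
    linarith


lemma sg_lemma {n : ℕ} (E : Finset (Fin n × Fin n)) (y : Fin n → ℝ)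
    (lF lNI : ℝ) (hF : 0 ≤ lF) (hNI : 0 ≤ lNI) (βstar : Fin n → ℝ)
    (hmin : ∀ β, graphFlniObj E y lF 0 lNI βstar ≤ graphFlniObj E y lF 0 lNI β)
    (γ : Fin n → ℝ) :
    ∑ i, (y i - βstar i) * (γ i - βstar i) ≤
      (lF * ∑ e ∈ E, |γ e.1 - γ e.2| + lNI * ∑ e ∈ E, max (γ e.1 - γ e.2) 0)
      - (lF * ∑ e ∈ E, |βstar e.1 - βstar e.2|
          + lNI * ∑ e ∈ E, max (βstar e.1 - βstar e.2) 0) := by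
  set A := ∑ i, (y i - βstar i) * (γ i - βstar i) with hA
  set C := ∑ i, (γ i - βstar i) ^ 2 with hC
  have hC0 : 0 ≤ C := Finset.sum_nonneg fun i _ => sq_nonneg _
  set R := (lF * ∑ e ∈ E, |γ e.1 - γ e.2| + lNI * ∑ e ∈ E, max (γ e.1 - γ e.2) 0)
      - (lF * ∑ e ∈ E, |βstar e.1 - βstar e.2|
          + lNI * ∑ e ∈ E, max (βstar e.1 - βstar e.2) 0) with hR
  have key : ∀ t : ℝ, 0 < t → t ≤ 1 → A ≤ R + t * (C / 2) := by
    intro t ht ht1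
    have h1 := hmin (fun i => βstar i + t * (γ i - βstar i))
    unfold graphFlniObj at h1
    simp only [zero_mul, add_zero] at h1
    -- quadratic expansion
    have hq : ∑ i, (y i - (βstar i + t * (γ i - βstar i))) ^ 2
        = ∑ i, (y i - βstar i) ^ 2 - 2 * t * A + t ^ 2 * C := by
      rw [hA, hC, Finset.mul_sum, Finset.mul_sum, ← Finset.sum_sub_distrib,
        ← Finset.sum_add_distrib]
      exact Finset.sum_congr rfl fun i _ => by ring
    rw [hq] at h1
    -- convexity of the absolute-value penalty
    have hs1 : ∑ e ∈ E, |(βstar e.1 + t * (γ e.1 - βstar e.1)) - (βstar e.2 + t * (γ e.2 - βstar e.2))|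
        ≤ (1 - t) * ∑ e ∈ E, |βstar e.1 - βstar e.2| + t * ∑ e ∈ E, |γ e.1 - γ e.2| := by
      rw [Finset.mul_sum, Finset.mul_sum, ← Finset.sum_add_distrib]
      refine Finset.sum_le_sum fun e _ => ?_
      have he : (βstar e.1 + t * (γ e.1 - βstar e.1)) - (βstar e.2 + t * (γ e.2 - βstar e.2))
          = (1 - t) * (βstar e.1 - βstar e.2) + t * (γ e.1 - γ e.2) := by ring
      rw [he]
      calc |(1 - t) * (βstar e.1 - βstar e.2) + t * (γ e.1 - γ e.2)|
          ≤ |(1 - t) * (βstar e.1 - βstar e.2)| + |t * (γ e.1 - γ e.2)| := abs_add_le _ _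
        _ = (1 - t) * |βstar e.1 - βstar e.2| + t * |γ e.1 - γ e.2| := by
            rw [abs_mul, abs_mul, abs_of_nonneg (by linarith : (0:ℝ) ≤ 1 - t),
              abs_of_nonneg ht.le]
    -- convexity of the max penalty
    have hs2 : ∑ e ∈ E, max ((βstar e.1 + t * (γ e.1 - βstar e.1)) - (βstar e.2 + t * (γ e.2 - βstar e.2))) 0
        ≤ (1 - t) * ∑ e ∈ E, max (βstar e.1 - βstar e.2) 0 + t * ∑ e ∈ E, max (γ e.1 - γ e.2) 0 := by
      rw [Finset.mul_sum, Finset.mul_sum, ← Finset.sum_add_distrib]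
      refine Finset.sum_le_sum fun e _ => ?_
      have he : (βstar e.1 + t * (γ e.1 - βstar e.1)) - (βstar e.2 + t * (γ e.2 - βstar e.2))
          = (1 - t) * (βstar e.1 - βstar e.2) + t * (γ e.1 - γ e.2) := by ring
      rw [he]
      apply max_le
      · have g1 : (1 - t) * (βstar e.1 - βstar e.2) ≤ (1 - t) * max (βstar e.1 - βstar e.2) 0 :=
          mul_le_mul_of_nonneg_left (le_max_left _ _) (by linarith)
        have g2 : t * (γ e.1 - γ e.2) ≤ t * max (γ e.1 - γ e.2) 0 :=
          mul_le_mul_of_nonneg_left (le_max_left _ _) ht.le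
        linarith
      · have g1 : (0:ℝ) ≤ (1 - t) * max (βstar e.1 - βstar e.2) 0 :=
          mul_nonneg (by linarith) (le_max_right _ _)
        have g2 : (0:ℝ) ≤ t * max (γ e.1 - γ e.2) 0 :=
          mul_nonneg ht.le (le_max_right _ _)
        linarith
    have h2 := mul_le_mul_of_nonneg_left hs1 hF
    have h3 := mul_le_mul_of_nonneg_left hs2 hNI
    have h4 : t * A ≤ t * (R + t * (C / 2)) := by nlinarith [h1, h2, h3]
    exact le_of_mul_le_mul_left h4 ht
  -- take t → 0
  refine le_of_forall_pos_le_add fun ε hε => ?_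
  have hden : (0:ℝ) < C / 2 + 1 := by linarith
  set t := min 1 (ε / (C / 2 + 1)) with htdef
  have ht0 : 0 < t := lt_min one_pos (div_pos hε hden)
  have ht1 : t ≤ 1 := min_le_left _ _
  have h5 := key t ht0 ht1
  have h6 : t * (C / 2) ≤ ε := by
    have h7 : t ≤ ε / (C / 2 + 1) := min_le_right _ _
    have h8 : t * (C / 2) ≤ (ε / (C / 2 + 1)) * (C / 2) :=
      mul_le_mul_of_nonneg_right h7 (by linarith)
    have h9 : (ε / (C / 2 + 1)) * (C / 2) ≤ ε := by
      rw [div_mul_eq_mul_div, div_le_iff₀ hden]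
      nlinarith
    linarith
  linarith

/-- Componentwise soft-thresholding of the fused nearly-isotonic solution
(the minimizer with `λ_L = 0`) gives the unique minimizer of the fused lasso
nearly-isotonic objective. -/
theorem flni_soft_thresholding {n : ℕ} (E : Finset (Fin n × Fin n)) (y : Fin n → ℝ)
    (lF lL lNI : ℝ) (hF : 0 ≤ lF) (hL : 0 ≤ lL) (hNI : 0 ≤ lNI)
    (βstar : Fin n → ℝ)
    (hmin : ∀ β, graphFlniObj E y lF 0 lNI βstar ≤ graphFlniObj E y lF 0 lNI β) :
    ∀ β : Fin n → ℝ, β ≠ (fun i => softThresh lL (βstar i)) →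
      graphFlniObj E y lF lL lNI (fun i => softThresh lL (βstar i)) <
        graphFlniObj E y lF lL lNI β := by
  intro β hne
  set b : Fin n → ℝ := fun i => softThresh lL (βstar i) with hb
  have hbi : ∀ i, b i = softThresh lL (βstar i) := fun i => rfl
  set γ : Fin n → ℝ := fun i => β i + (βstar i - b i) with hγ
  -- subgradient inequality at γ
  have hsg := sg_lemma E y lF lNI hF hNI βstar hmin γ
  have hsg' : ∑ i, (y i - βstar i) * (β i - b i) ≤
      (lF * ∑ e ∈ E, |γ e.1 - γ e.2| + lNI * ∑ e ∈ E, max (γ e.1 - γ e.2) 0)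
      - (lF * ∑ e ∈ E, |βstar e.1 - βstar e.2|
          + lNI * ∑ e ∈ E, max (βstar e.1 - βstar e.2) 0) := by
    have : ∀ i ∈ Finset.univ, (y i - βstar i) * (β i - b i)
        = (y i - βstar i) * (γ i - βstar i) := fun i _ => by
      have h : γ i = β i + (βstar i - b i) := rfl
      rw [h]; ring
    rw [Finset.sum_congr rfl this]; exact hsg
  -- edgewise submodularity
  have hedge : ∀ e ∈ E,
      lF * |γ e.1 - γ e.2| + lNI * max (γ e.1 - γ e.2) 0
        + (lF * |b e.1 - b e.2| + lNI * max (b e.1 - b e.2) 0)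
      ≤ lF * |β e.1 - β e.2| + lNI * max (β e.1 - β e.2) 0
        + (lF * |βstar e.1 - βstar e.2| + lNI * max (βstar e.1 - βstar e.2) 0) := by
    intro e _
    set u := β e.1 - β e.2 with hu
    set v := b e.1 - b e.2 with hv
    set δ := (βstar e.1 - b e.1) - (βstar e.2 - b e.2) with hδ
    have hc1 : 0 < v → 0 ≤ δ := by
      intro h
      have h2 : βstar e.2 < βstar e.1 := by
        by_contra h3
        push_neg at h3
        have := st_mono hL h3
        rw [← hbi e.1, ← hbi e.2] at this
        rw [hv] at h; linarith
      have := st_res_mono hL h2.le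
      simp only at this
      rw [← hbi e.1, ← hbi e.2] at this
      rw [hδ]; linarith
    have hc2 : v < 0 → δ ≤ 0 := by
      intro h
      have h2 : βstar e.1 < βstar e.2 := by
        by_contra h3
        push_neg at h3
        have := st_mono hL h3
        rw [← hbi e.1, ← hbi e.2] at this
        rw [hv] at h; linarith
      have := st_res_mono hL h2.le
      simp only at this
      rw [← hbi e.1, ← hbi e.2] at this
      rw [hδ]; linarith
    have e1 : γ e.1 - γ e.2 = u + δ := by rw [hγ, hu, hδ]; ring
    have e2 : βstar e.1 - βstar e.2 = v + δ := by rw [hv, hδ]; ring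
    rw [e1, e2]
    have l1 := phi_lip hF hNI u δ
    have l2 := phi_lower hF hNI v δ hc1 hc2
    linarith
  have hPsum : (lF * ∑ e ∈ E, |γ e.1 - γ e.2| + lNI * ∑ e ∈ E, max (γ e.1 - γ e.2) 0)
      + (lF * ∑ e ∈ E, |b e.1 - b e.2| + lNI * ∑ e ∈ E, max (b e.1 - b e.2) 0)
      ≤ (lF * ∑ e ∈ E, |β e.1 - β e.2| + lNI * ∑ e ∈ E, max (β e.1 - β e.2) 0)
      + (lF * ∑ e ∈ E, |βstar e.1 - βstar e.2|
          + lNI * ∑ e ∈ E, max (βstar e.1 - βstar e.2) 0) := by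
    have h := Finset.sum_le_sum hedge
    simp only [Finset.sum_add_distrib, ← Finset.mul_sum] at h
    linarith
  -- lasso coordinate inequality
  have hLsum : ∑ i, (βstar i - b i) * (β i - b i) ≤ lL * ∑ i, |β i| - lL * ∑ i, |b i| := by
    have h := Finset.sum_le_sum (fun i (_ : i ∈ Finset.univ) => st_key hL (βstar i) (β i))
    simp only [← hbi] at h
    simp only [Finset.sum_sub_distrib, ← Finset.mul_sum] at h
    exact h
  -- quadratic identity
  have hquad : ∑ i, (y i - β i) ^ 2
      = ∑ i, (y i - b i) ^ 2 - 2 * ∑ i, (y i - βstar i) * (β i - b i)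
        - 2 * ∑ i, (βstar i - b i) * (β i - b i) + ∑ i, (β i - b i) ^ 2 := by
    rw [Finset.mul_sum, Finset.mul_sum, ← Finset.sum_sub_distrib, ← Finset.sum_sub_distrib,
      ← Finset.sum_add_distrib]
    exact Finset.sum_congr rfl fun i _ => by ring
  -- positivity
  have hex : ∃ i, β i ≠ b i := by
    by_contra h
    push_neg at h
    exact hne (funext h)
  obtain ⟨i, hi⟩ := hex
  have hpos : 0 < ∑ i, (β i - b i) ^ 2 := by
    have h1 : 0 < (β i - b i) ^ 2 := by
      have : β i - b i ≠ 0 := sub_ne_zero.mpr hi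
      positivity
    have h2 : (β i - b i) ^ 2 ≤ ∑ j, (β j - b j) ^ 2 :=
      Finset.single_le_sum (f := fun j => (β j - b j) ^ 2) (fun j _ => sq_nonneg _) (Finset.mem_univ i)
    linarith
  unfold graphFlniObj
  linarith [hquad, hsg', hPsum, hLsum, hpos]
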